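/- arXiv:1809.04008 — 5 statements merged into one kernel-verified Lean document; each statement's English description precedes it below -/
import Mathlib

section
/- Let Γ₁ be a uniformly bounded, connected, amenable weighted graph, let Γ₂ be a weighted graph whose vertex set and edge set are finite, and suppose Γ₁ covers Γ₂. Let H₁ and H₂ be the Laplace-type operators of Γ₁ and Γ₂ on ℓ²(V₁) and ℓ²(V₂) respectively. Then σ(H₂) ⊆ σ(H₁). -/
/-! An eigenvector `g` of `H₂` lifts to the periodic function `g ∘ φ` on `V₁`, which satisfies
`H₁ (g ∘ φ) = λ (g ∘ φ)` pointwise because a covering is a local isomorphism of weighted graphs.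
Cutting `g ∘ φ` off outside the `R`-neighbourhood of a Følner set `F` gives an `ℓ²` vector that is
an exact eigenvector except on the layer between `F` and its `(R+1)`-neighbourhood, which has at
most `(D+1)^R |∂F|` vertices. Choosing `R` so that every vertex lies within distance `R` of a lift
of a point where `g ≠ 0`, the squared norm of the cut-off is at least of order `|F|`. Hence
`‖(H₁ - λ) f‖² / ‖f‖² = O(|∂F| / |F|)`, which tends to `0` along the Følner sequence, so `λ` is an
approximate eigenvalue of `H₁`. -/

noncomputable section

/-- A weighted graph: an edge set `E`, a vertex set `V`, an endpoint map `ends : E → Sym2 V`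
(an edge `e` with `ends e = s(v, v)` is a loop), and a weight `wt v e ∈ ℂ` (only the values at
incident pairs, i.e. with `v ∈ ends e`, are relevant). -/
structure WGraph (V E : Type*) where
  ends : E → Sym2 V
  wt : V → E → ℂ

namespace WGraph

variable {V E : Type*} (Γ : WGraph V E)

/-- The set `E_v` of edges incident to the vertex `v`. -/
def edgesAt (v : V) : Set E := {e | v ∈ Γ.ends e}

/-- The underlying simple graph: `u` and `v` are adjacent if they are distinct and joined
by some edge. Used to define paths, distance and connectivity. -/
def simple : SimpleGraph V where
  Adj u v := u ≠ v ∧ ∃ e, Γ.ends e = s(u, v)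
  symm := by
    constructor
    intro u v h
    exact ⟨h.1.symm, h.2.imp fun e he => by rw [he, Sym2.eq_swap]⟩
  loopless := ⟨fun v h => h.1 rfl⟩

/-- `Γ` is connected: any two vertices are joined by a finite path of edges. -/
def Connected : Prop := Γ.simple.Connected

/-- The ball of radius `n` around a vertex `v` in the graph metric. -/
def ball (v : V) (n : ℕ) : Set V := {u | Γ.simple.dist v u ≤ n}

/-- `B₁(F)`: vertices at distance at most `1` from the set `F`. -/
def onePlus (F : Set V) : Set V := {u | ∃ w ∈ F, Γ.simple.dist w u ≤ 1}

/-- `Γ` is uniformly bounded: uniformly bounded vertex degrees and uniformly bounded weights. -/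
def UniformlyBounded : Prop :=
  (∃ D : ℕ, ∀ v, (Γ.edgesAt v).Finite ∧ (Γ.edgesAt v).ncard ≤ D) ∧
    ∃ C : ℝ, ∀ v e, v ∈ Γ.ends e → ‖Γ.wt v e‖ ≤ C

/-- `Γ` is amenable: there is a Følner sequence of finite vertex sets. -/
def Amenable : Prop :=
  ∃ F : ℕ → Finset V, (∀ k, (F k).Nonempty) ∧ (∀ k, F k ⊆ F (k + 1)) ∧
    (⋃ k, (F k : Set V)) = Set.univ ∧
    Filter.Tendsto
      (fun k => (((Γ.onePlus (F k) \ (F k : Set V)).ncard : ℝ) / (F k).card))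
      Filter.atTop (nhds 0)

/-- `Γ` has subexponential growth: `liminf |B_n(v)|^(1/n) = 1` for some vertex `v`. -/
def SubexpGrowth : Prop :=
  ∃ v : V, Filter.liminf
    (fun n : ℕ => ((Γ.ball v n).ncard : ℝ) ^ ((n : ℝ)⁻¹)) Filter.atTop = 1

end WGraph

/-- A covering of weighted graphs: surjections on vertices and edges, compatible with the
endpoint maps, restricting to a bijection `E_v → E_{φ v}` for every vertex `v`, and
preserving the weights at incident pairs. -/
structure IsCovering {V₁ E₁ V₂ E₂ : Type*} (Γ₁ : WGraph V₁ E₁) (Γ₂ : WGraph V₂ E₂)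
    (φV : V₁ → V₂) (φE : E₁ → E₂) : Prop where
  surj_vertex : Function.Surjective φV
  surj_edge : Function.Surjective φE
  map_ends : ∀ e, Γ₂.ends (φE e) = (Γ₁.ends e).map φV
  bijOn_edgesAt : ∀ v : V₁, Set.BijOn φE (Γ₁.edgesAt v) (Γ₂.edgesAt (φV v))
  map_wt : ∀ v e, v ∈ Γ₁.ends e → Γ₁.wt v e = Γ₂.wt (φV v) (φE e)

open scoped ENNReal

/-- The Hilbert space `ℓ²(α)` of square-summable complex functions on `α`. -/
abbrev l2 (α : Type*) : Type _ := lp (fun _ : α => ℂ) 2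

open Finset

theorem mem_spectrum_of_forall_exists_norm_sub_smul_le {𝕜 X : Type*} [NontriviallyNormedField 𝕜]
    [NormedAddCommGroup X] [NormedSpace 𝕜 X] (T : X →L[𝕜] X) (μ : 𝕜)
    (h : ∀ ε > 0, ∃ x, x ≠ 0 ∧ ‖T x - μ • x‖ ≤ ε * ‖x‖) : μ ∈ spectrum 𝕜 T := by
  by_contra hμ
  obtain ⟨u, hu⟩ := spectrum.notMem_iff.mp hμ
  set c := ‖(↑u⁻¹ : X →L[𝕜] X)‖
  have hbelow (x : X) : ‖x‖ ≤ c * ‖T x - μ • x‖ := by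
    have hx : (↑u⁻¹ : X →L[𝕜] X) ((↑u : X →L[𝕜] X) x) = x := by
      change (↑u⁻¹ * ↑u : X →L[𝕜] X) x = x
      rw [Units.inv_mul]
      rfl
    calc ‖x‖ = ‖(↑u⁻¹ : X →L[𝕜] X) ((↑u : X →L[𝕜] X) x)‖ := by rw [hx]
      _ ≤ c * ‖(↑u : X →L[𝕜] X) x‖ := ContinuousLinearMap.le_opNorm _ _
      _ = c * ‖T x - μ • x‖ := by
        rw [hu, ← norm_neg]
        simp [Algebra.algebraMap_eq_smul_one]
  obtain ⟨x, hx0, hx⟩ := h (c + 1)⁻¹ (by positivity)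
  have hle : ‖x‖ ≤ c / (c + 1) * ‖x‖ :=
    calc ‖x‖ ≤ c * ((c + 1)⁻¹ * ‖x‖) := (hbelow x).trans (by gcongr)
      _ = c / (c + 1) * ‖x‖ := by ring
  have hlt : c / (c + 1) < 1 := (div_lt_one (by positivity)).mpr (lt_add_one c)
  exact hle.not_gt (mul_lt_of_lt_one_left (norm_pos_iff.mpr hx0) hlt)

theorem ContinuousLinearMap.exists_eigenvector_of_mem_spectrum {X : Type*} [NormedAddCommGroup X]
    [NormedSpace ℂ X] [FiniteDimensional ℂ X] {T : X →L[ℂ] X} {μ : ℂ} (h : μ ∈ spectrum ℂ T) :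
    ∃ x, x ≠ 0 ∧ T x = μ • x := by
  rw [ContinuousLinearMap.spectrum_eq, ← Module.End.hasEigenvalue_iff_mem_spectrum] at h
  obtain ⟨x, hx⟩ := h.exists_hasEigenvector
  exact ⟨x, hx.2, hx.apply_eq_smul⟩

instance {α : Type*} [Finite α] : FiniteDimensional ℂ (l2 α) :=
  have := Fintype.ofFinite α
  (lpPiLpₗᵢ _ ℂ).toLinearEquiv.symm.finiteDimensional

theorem lp.norm_sq_eq_tsum {α : Type*} {E : α → Type*} [∀ i, NormedAddCommGroup (E i)]
    (x : lp E 2) : ‖x‖ ^ 2 = ∑' i, ‖x i‖ ^ 2 := by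
  simpa using lp.norm_rpow_eq_tsum (p := 2) (by norm_num) x

theorem lp.norm_sq_le_of_support {α : Type*} {E : α → Type*} [∀ i, NormedAddCommGroup (E i)]
    (x : lp E 2) {B : Finset α} (hB : ∀ i ∉ B, x i = 0) {K : ℝ} (hK : ∀ i ∈ B, ‖x i‖ ≤ K) :
    ‖x‖ ^ 2 ≤ #B * K ^ 2 := by
  rw [lp.norm_sq_eq_tsum, tsum_eq_sum fun i hi => by simp [hB i hi]]
  simpa using sum_le_sum fun i hi => pow_le_pow_left₀ (norm_nonneg _) (hK i hi) 2

def l2Indicator {α : Type*} [DecidableEq α] (S : Finset α) (f : α → ℂ) : l2 α :=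
  ∑ i ∈ S, lp.single 2 i (f i)

section l2Indicator

variable {α : Type*} [DecidableEq α] (S : Finset α) (f : α → ℂ)

theorem coe_l2Indicator : ⇑(l2Indicator S f) = (S : Set α).indicator f := by
  ext j
  rw [l2Indicator, lp.coeFn_sum, Finset.sum_apply]
  simp [lp.single_apply, Set.indicator_apply, Pi.single_apply]

theorem norm_sq_l2Indicator : ‖l2Indicator S f‖ ^ 2 = ∑ i ∈ S, ‖f i‖ ^ 2 := by
  simpa [l2Indicator] using lp.norm_sum_single (p := 2) (E := fun _ : α => ℂ) (by norm_num) f S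

end l2Indicator

namespace SimpleGraph

variable {V : Type*} (G : SimpleGraph V) [DecidableEq V] [G.LocallyFinite]

def closedNbhd (A : Finset V) : Finset V := A ∪ A.biUnion fun v => G.neighborFinset v

def thicken (n : ℕ) : Finset V → Finset V := G.closedNbhd^[n]

variable {G}

theorem mem_closedNbhd {A : Finset V} {u : V} :
    u ∈ G.closedNbhd A ↔ u ∈ A ∨ ∃ w ∈ A, G.Adj w u := by
  simp [closedNbhd]

theorem subset_closedNbhd (A : Finset V) : A ⊆ G.closedNbhd A := subset_union_left

theorem closedNbhd_mono {A B : Finset V} (h : A ⊆ B) : G.closedNbhd A ⊆ G.closedNbhd B :=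
  union_subset_union h (biUnion_subset_biUnion_of_subset_left _ h)

theorem card_closedNbhd_le {D : ℕ} (hD : ∀ v, G.degree v ≤ D) (A : Finset V) :
    #(G.closedNbhd A) ≤ (D + 1) * #A :=
  calc #(G.closedNbhd A) ≤ #A + #(A.biUnion fun v => G.neighborFinset v) := card_union_le _ _
    _ ≤ #A + ∑ v ∈ A, G.degree v := by gcongr; exact card_biUnion_le
    _ ≤ #A + #A * D := by gcongr; simpa using sum_le_card_nsmul A _ D fun v _ => hD v
    _ = (D + 1) * #A := by ring

theorem thicken_succ (n : ℕ) (A : Finset V) :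
    G.thicken (n + 1) A = G.closedNbhd (G.thicken n A) :=
  Function.iterate_succ_apply' _ _ _

theorem thicken_succ' (n : ℕ) (A : Finset V) :
    G.thicken (n + 1) A = G.thicken n (G.closedNbhd A) :=
  Function.iterate_succ_apply _ _ _

theorem thicken_monotone (A : Finset V) : Monotone (G.thicken · A) :=
  monotone_nat_of_le_succ fun n => by rw [thicken_succ]; exact subset_closedNbhd _

theorem subset_thicken (n : ℕ) (A : Finset V) : A ⊆ G.thicken n A :=
  thicken_monotone A (Nat.zero_le n)

theorem card_thicken_le {D : ℕ} (hD : ∀ v, G.degree v ≤ D) (n : ℕ) (A : Finset V) :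
    #(G.thicken n A) ≤ (D + 1) ^ n * #A := by
  induction n with
  | zero => simp [thicken]
  | succ n ih =>
    rw [thicken_succ, pow_succ', mul_assoc]
    exact (card_closedNbhd_le hD _).trans (Nat.mul_le_mul_left _ ih)

theorem mem_thicken_of_walk {A : Finset V} {w u : V} (hw : w ∈ A) (p : G.Walk w u) :
    u ∈ G.thicken p.length A := by
  induction p generalizing A with
  | nil => exact hw
  | cons h p ih =>
    rw [Walk.length_cons, thicken_succ']
    exact ih (mem_closedNbhd.mpr (Or.inr ⟨_, hw, h⟩))

theorem thicken_succ_sdiff_subset (n : ℕ) (A : Finset V) :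
    G.thicken (n + 1) A \ A ⊆ G.thicken n (G.closedNbhd A \ A) := by
  induction n with
  | zero => exact subset_rfl
  | succ n ih =>
    intro u hu
    obtain ⟨hu, huA⟩ := mem_sdiff.mp hu
    rw [thicken_succ, mem_closedNbhd] at hu
    rw [thicken_succ]
    rcases hu with hu | ⟨w, hw, hwu⟩
    · exact subset_closedNbhd _ (ih (mem_sdiff.mpr ⟨hu, huA⟩))
    by_cases hwA : w ∈ A
    · exact subset_closedNbhd _ <| subset_thicken n _ <|
        mem_sdiff.mpr ⟨mem_closedNbhd.mpr (Or.inr ⟨w, hwA, hwu⟩), huA⟩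
    · exact mem_closedNbhd.mpr (Or.inr ⟨w, ih (mem_sdiff.mpr ⟨hw, hwA⟩), hwu⟩)

theorem card_thicken_succ_sdiff_le {D : ℕ} (hD : ∀ v, G.degree v ≤ D) (n : ℕ) (A : Finset V) :
    #(G.thicken (n + 1) A \ A) ≤ (D + 1) ^ n * #(G.closedNbhd A \ A) :=
  (card_le_card (thicken_succ_sdiff_subset n A)).trans (card_thicken_le hD n _)

theorem card_le_mul_card_filter_thicken {D R : ℕ} (hD : ∀ v, G.degree v ≤ D)
    {P : V → Prop} [DecidablePred P] (hP : ∀ v, ∃ u, P u ∧ ∃ p : G.Walk v u, p.length ≤ R)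
    (A : Finset V) : #A ≤ (D + 1) ^ R * #((G.thicken R A).filter P) := by
  choose c hcP p hp using hP
  refine card_le_mul_card_image_of_maps_to (f := c) (fun v hv => ?_) _ fun b _ => ?_
  · exact mem_filter.mpr ⟨thicken_monotone A (hp v) (mem_thicken_of_walk hv (p v)), hcP v⟩
  · calc #{v ∈ A | c v = b} ≤ #(G.thicken R {b}) := card_le_card fun v hv => by
          obtain ⟨-, rfl⟩ := mem_filter.mp hv
          exact thicken_monotone _ (by simpa using hp v)
            (mem_thicken_of_walk (mem_singleton_self _) (p v).reverse)
      _ ≤ (D + 1) ^ R := by simpa using card_thicken_le hD R {b}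

theorem card_mul_le_pow_mul_norm_sq_l2Indicator_thicken {D R : ℕ} (hD : ∀ v, G.degree v ≤ D)
    {h : V → ℂ} {a : ℝ} (ha : 0 ≤ a) (hR : ∀ v, ∃ u, a ≤ ‖h u‖ ^ 2 ∧ ∃ p : G.Walk v u, p.length ≤ R)
    (A : Finset V) : #A * a ≤ (D + 1) ^ R * ‖l2Indicator (G.thicken R A) h‖ ^ 2 := by
  set T := (G.thicken R A).filter (a ≤ ‖h ·‖ ^ 2)
  calc #A * a ≤ (D + 1) ^ R * (#T * a) := by
        rw [← mul_assoc]
        gcongr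
        exact_mod_cast card_le_mul_card_filter_thicken hD hR A
    _ ≤ (D + 1) ^ R * ∑ i ∈ T, ‖h i‖ ^ 2 := by
        gcongr
        simpa using card_nsmul_le_sum T _ a fun i hi => (mem_filter.mp hi).2
    _ ≤ (D + 1) ^ R * ∑ i ∈ G.thicken R A, ‖h i‖ ^ 2 := by
        gcongr
        exact filter_subset _ _
    _ = (D + 1) ^ R * ‖l2Indicator (G.thicken R A) h‖ ^ 2 := by rw [norm_sq_l2Indicator]

end SimpleGraph

namespace WGraph

variable {V E : Type*} (Γ : WGraph V E)

/-- The Laplace-type operator acting on all functions `V → ℂ`, not only on `ℓ²(V)`: the lift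
`g ∘ φ` of a function on the base of a covering is in general not square-summable. -/
def lap (f : V → ℂ) (v : V) : ℂ :=
  ∑' e : {e : E // v ∈ Γ.ends e}, Γ.wt v e.1 * f (Sym2.Mem.other e.2)

variable {Γ}

theorem other_eq_or_adj {v : V} {e : E} (h : v ∈ Γ.ends e) :
    Sym2.Mem.other h = v ∨ Γ.simple.Adj v (Sym2.Mem.other h) := by
  by_cases hv : Sym2.Mem.other h = v
  · exact Or.inl hv
  · exact Or.inr ⟨Ne.symm hv, e, (Sym2.other_spec h).symm⟩

theorem mk_image_neighborSet_subset (v : V) :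
    (fun u => s(v, u)) '' Γ.simple.neighborSet v ⊆ Γ.ends '' Γ.edgesAt v := by
  rintro _ ⟨u, ⟨-, e, he⟩, rfl⟩
  exact ⟨e, by simp [edgesAt, he], he⟩

theorem finite_neighborSet {v : V} (hv : (Γ.edgesAt v).Finite) :
    (Γ.simple.neighborSet v).Finite :=
  Set.Finite.of_finite_image ((hv.image _).subset (mk_image_neighborSet_subset v))
    fun _ _ _ _ h => Sym2.congr_right.mp h

abbrev locallyFinite (hfin : ∀ v, (Γ.edgesAt v).Finite) : Γ.simple.LocallyFinite :=
  fun v => (finite_neighborSet (hfin v)).fintype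

theorem degree_le_ncard_edgesAt [Γ.simple.LocallyFinite] {v : V} (hv : (Γ.edgesAt v).Finite) :
    Γ.simple.degree v ≤ (Γ.edgesAt v).ncard :=
  calc Γ.simple.degree v = ((fun u => s(v, u)) '' Γ.simple.neighborSet v).ncard := by
        rw [Set.ncard_image_of_injective _ fun _ _ h => Sym2.congr_right.mp h,
          ← SimpleGraph.card_neighborFinset_eq_degree, ← Set.ncard_coe_finset,
          SimpleGraph.coe_neighborFinset]
    _ ≤ (Γ.ends '' Γ.edgesAt v).ncard :=
        Set.ncard_le_ncard (mk_image_neighborSet_subset v) (hv.image _)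
    _ ≤ (Γ.edgesAt v).ncard := Set.ncard_image_le hv

theorem onePlus_eq_closedNbhd [DecidableEq V] [Γ.simple.LocallyFinite] (hconn : Γ.Connected)
    (A : Finset V) : Γ.onePlus A = Γ.simple.closedNbhd A := by
  ext u
  simp only [onePlus, Set.mem_ofPred_eq, mem_coe, SimpleGraph.mem_closedNbhd]
  constructor
  · rintro ⟨w, hw, hwu⟩
    rcases Nat.le_one_iff_eq_zero_or_eq_one.mp hwu with h | h
    · exact Or.inl (SimpleGraph.Connected.dist_eq_zero_iff hconn |>.mp h ▸ hw)
    · exact Or.inr ⟨w, hw, SimpleGraph.dist_eq_one_iff_adj.mp h⟩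
  · rintro (hu | ⟨w, hw, hwu⟩)
    · exact ⟨u, hu, by simp⟩
    · exact ⟨w, hw, (SimpleGraph.dist_eq_one_iff_adj.mpr hwu).le⟩

theorem lap_congr {f f' : V → ℂ} {v : V}
    (h : ∀ e (he : v ∈ Γ.ends e), f (Sym2.Mem.other he) = f' (Sym2.Mem.other he)) :
    Γ.lap f v = Γ.lap f' v :=
  tsum_congr fun e => by rw [h e.1 e.2]

section Indicator

variable [DecidableEq V] [Γ.simple.LocallyFinite] {S : Finset V} {f : V → ℂ} {v : V}

theorem lap_indicator_of_closedNbhd_subset (hv : Γ.simple.closedNbhd {v} ⊆ S) :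
    Γ.lap ((S : Set V).indicator f) v = Γ.lap f v :=
  lap_congr fun e he => Set.indicator_of_mem (hv <| SimpleGraph.mem_closedNbhd.mpr <|
    (other_eq_or_adj he).imp (by simp) fun h => ⟨v, mem_singleton_self v, h⟩) f

theorem lap_indicator_of_notMem_closedNbhd (hv : v ∉ Γ.simple.closedNbhd S) :
    Γ.lap ((S : Set V).indicator f) v = 0 := by
  rw [lap_congr (f' := 0) fun e he => Set.indicator_of_notMem (fun hS => hv ?_) f]
  · simp [lap]
  · rcases other_eq_or_adj he with h | h
    · exact SimpleGraph.subset_closedNbhd S (h ▸ hS)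
    · exact SimpleGraph.mem_closedNbhd.mpr (Or.inr ⟨_, hS, h.symm⟩)

end Indicator

theorem norm_lap_le {f : V → ℂ} {v : V} (hv : (Γ.edgesAt v).Finite) {C G : ℝ}
    (hC : ∀ e, v ∈ Γ.ends e → ‖Γ.wt v e‖ ≤ C) (hG : ∀ u, ‖f u‖ ≤ G) :
    ‖Γ.lap f v‖ ≤ (Γ.edgesAt v).ncard * (C * G) := by
  have : Fintype {e : E // v ∈ Γ.ends e} := hv.fintype
  rw [lap, tsum_fintype]
  calc _ ≤ ∑ _e : {e : E // v ∈ Γ.ends e}, C * G := norm_sum_le_of_le _ fun e _ => by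
        rw [norm_mul]
        exact mul_le_mul_of_nonneg (hC e.1 e.2) (hG _) (norm_nonneg _)
          ((norm_nonneg _).trans (hG (Sym2.Mem.other e.2)))
    _ = (Γ.edgesAt v).ncard * (C * G) := by
        rw [sum_const, card_univ, nsmul_eq_mul, ← Nat.card_eq_fintype_card]
        rfl

end WGraph

namespace IsCovering

variable {V₁ E₁ V₂ E₂ : Type*} {Γ₁ : WGraph V₁ E₁} {Γ₂ : WGraph V₂ E₂}
  {φV : V₁ → V₂} {φE : E₁ → E₂}

theorem other_map (hcov : IsCovering Γ₁ Γ₂ φV φE) {v : V₁} {e : E₁} (h : v ∈ Γ₁.ends e)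
    (h₂ : φV v ∈ Γ₂.ends (φE e)) : Sym2.Mem.other h₂ = φV (Sym2.Mem.other h) :=
  Sym2.congr_right.mp <| by
    rw [Sym2.other_spec h₂, hcov.map_ends, ← Sym2.map_mk, Sym2.other_spec h]

theorem lap_comp (hcov : IsCovering Γ₁ Γ₂ φV φE) (g : V₂ → ℂ) (v : V₁) :
    Γ₁.lap (g ∘ φV) v = Γ₂.lap g (φV v) := by
  let eqv : {e // v ∈ Γ₁.ends e} ≃ {e // φV v ∈ Γ₂.ends e} := (hcov.bijOn_edgesAt v).equiv φE
  rw [WGraph.lap, WGraph.lap, ← eqv.tsum_eq]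
  refine tsum_congr fun e => ?_
  rw [Function.comp_apply, hcov.map_wt v e.1 e.2, ← hcov.other_map e.2 (eqv e).2]
  rfl

theorem exists_adj_lift (hcov : IsCovering Γ₁ Γ₂ φV φE) {v : V₁} {b : V₂}
    (h : Γ₂.simple.Adj (φV v) b) : ∃ u, φV u = b ∧ Γ₁.simple.Adj v u := by
  obtain ⟨hne, e₂, he₂⟩ := h
  obtain ⟨e, he, rfl⟩ := (hcov.bijOn_edgesAt v).surjOn
    (show e₂ ∈ Γ₂.edgesAt (φV v) by simp [WGraph.edgesAt, he₂])
  have h₂ : φV v ∈ Γ₂.ends (φE e) := by rw [he₂]; exact Sym2.mem_mk_left _ _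
  have hb : φV (Sym2.Mem.other he) = b := by
    rw [← hcov.other_map he h₂]
    exact Sym2.congr_right.mp ((Sym2.other_spec h₂).trans he₂)
  exact ⟨_, hb, fun hv => hne (by rw [← hb, ← hv]), e, (Sym2.other_spec he).symm⟩

theorem exists_walk_lift (hcov : IsCovering Γ₁ Γ₂ φV φE) {v : V₁} {w : V₂}
    (p : Γ₂.simple.Walk (φV v) w) :
    ∃ u, φV u = w ∧ ∃ q : Γ₁.simple.Walk v u, q.length = p.length := by
  suffices ∀ {a} (p : Γ₂.simple.Walk a w) (v : V₁), φV v = a →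
      ∃ u, φV u = w ∧ ∃ q : Γ₁.simple.Walk v u, q.length = p.length from this p v rfl
  clear p v
  intro a p
  induction p with
  | nil => exact fun v hv => ⟨v, hv, .nil, rfl⟩
  | cons h p ih =>
    rintro v rfl
    obtain ⟨u', hu', hadj⟩ := hcov.exists_adj_lift h
    obtain ⟨u, hu, q, hq⟩ := ih u' hu'
    exact ⟨u, hu, .cons hadj q, by simp [hq]⟩

theorem reachable_map (hcov : IsCovering Γ₁ Γ₂ φV φE) {u v : V₁} (h : Γ₁.simple.Reachable u v) :
    Γ₂.simple.Reachable (φV u) (φV v) := by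
  rw [SimpleGraph.reachable_iff_reflTransGen] at h ⊢
  refine Relation.ReflTransGen.lift' φV (fun a b hab => ?_) _ _ h
  obtain ⟨-, e, he⟩ := hab
  by_cases hφ : φV a = φV b
  · exact (hφ ▸ .refl : Relation.ReflTransGen Γ₂.simple.Adj (φV a) (φV b))
  · exact .single ⟨hφ, φE e, by rw [hcov.map_ends, he, Sym2.map_mk]⟩

theorem exists_walk_to_fiber_le [Finite V₂] (hcov : IsCovering Γ₁ Γ₂ φV φE)
    (hconn : Γ₁.Connected) (w : V₂) :
    ∃ R, ∀ v, ∃ u, φV u = w ∧ ∃ p : Γ₁.simple.Walk v u, p.length ≤ R := by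
  obtain ⟨R, hR⟩ := (Set.finite_range fun a => Γ₂.simple.dist a w).bddAbove
  refine ⟨R, fun v => ?_⟩
  obtain ⟨w₁, rfl⟩ := hcov.surj_vertex w
  obtain ⟨p, hp⟩ := (hcov.reachable_map (hconn.preconnected v w₁)).exists_walk_length_eq_dist
  obtain ⟨u, hu, q, hq⟩ := hcov.exists_walk_lift p
  exact ⟨u, hu, q, hq ▸ hp ▸ hR ⟨_, rfl⟩⟩

section Eigenvector

open SimpleGraph

variable {g : V₂ → ℂ} {μ : ℂ}

theorem lap_indicator_thicken_comp [DecidableEq V₁] [Γ₁.simple.LocallyFinite]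
    (hcov : IsCovering Γ₁ Γ₂ φV φE) (hg : Γ₂.lap g = μ • g) {R : ℕ} (hR : 1 ≤ R)
    {F : Finset V₁} {v : V₁} (hv : v ∉ Γ₁.simple.thicken (R + 1) F \ F) :
    Γ₁.lap ((Γ₁.simple.thicken R F : Set V₁).indicator (g ∘ φV)) v =
      μ * (Γ₁.simple.thicken R F : Set V₁).indicator (g ∘ φV) v := by
  by_cases hvF : v ∈ F
  · have hsub : Γ₁.simple.closedNbhd {v} ⊆ Γ₁.simple.thicken R F :=
      (closedNbhd_mono (singleton_subset_iff.mpr hvF)).trans (thicken_monotone F hR)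
    rw [WGraph.lap_indicator_of_closedNbhd_subset hsub, hcov.lap_comp, hg,
      Set.indicator_of_mem (subset_thicken R F hvF)]
    rfl
  · have hv' : v ∉ Γ₁.simple.closedNbhd (Γ₁.simple.thicken R F) := by
      rw [← thicken_succ]
      exact fun h => hv (mem_sdiff.mpr ⟨h, hvF⟩)
    rw [WGraph.lap_indicator_of_notMem_closedNbhd hv',
      Set.indicator_of_notMem fun h => hv' (subset_closedNbhd _ h), mul_zero]

theorem norm_sq_sub_smul_indicator_comp_le [DecidableEq V₁] [Γ₁.simple.LocallyFinite]
    (hcov : IsCovering Γ₁ Γ₂ φV φE) {D : ℕ} {C G : ℝ}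
    (hD : ∀ v, (Γ₁.edgesAt v).Finite ∧ (Γ₁.edgesAt v).ncard ≤ D)
    (hC : ∀ v e, v ∈ Γ₁.ends e → ‖Γ₁.wt v e‖ ≤ C) (hC0 : 0 ≤ C)
    (hg : Γ₂.lap g = μ • g) (hG : ∀ w, ‖g w‖ ≤ G)
    {H₁ : l2 V₁ →L[ℂ] l2 V₁} (hH₁ : ∀ f v, H₁ f v = Γ₁.lap f v) {R : ℕ} (hR : 1 ≤ R)
    (F : Finset V₁) {f : l2 V₁} (hf : ⇑f = (Γ₁.simple.thicken R F : Set V₁).indicator (g ∘ φV)) :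
    ‖H₁ f - μ • f‖ ^ 2 ≤ #(Γ₁.simple.thicken (R + 1) F \ F) * (D * C * G + ‖μ‖ * G) ^ 2 := by
  have hfG (u : V₁) : ‖f u‖ ≤ G := by
    rw [hf]
    exact (norm_indicator_le_norm_self _ _).trans (hG _)
  have happly (v : V₁) : (H₁ f - μ • f) v = Γ₁.lap f v - μ * f v := by
    simp only [lp.coeFn_sub, lp.coeFn_smul, Pi.sub_apply, Pi.smul_apply, smul_eq_mul, hH₁]
  refine lp.norm_sq_le_of_support _ (fun v hv => ?_) fun v _ => ?_
  · rw [happly, hf, hcov.lap_indicator_thicken_comp hg hR hv, sub_self]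
  · have hG0 : 0 ≤ G := (norm_nonneg _).trans (hfG v)
    calc ‖(H₁ f - μ • f) v‖ ≤ ‖Γ₁.lap f v‖ + ‖μ‖ * ‖f v‖ := by
          rw [happly, ← norm_mul]
          exact norm_sub_le _ _
      _ ≤ (Γ₁.edgesAt v).ncard * (C * G) + ‖μ‖ * G := by
          gcongr
          exacts [WGraph.norm_lap_le (hD v).1 (hC v) hfG, hfG v]
      _ ≤ D * C * G + ‖μ‖ * G := by
          rw [mul_assoc]
          gcongr
          exact_mod_cast (hD v).2

theorem exists_approx_eigenvector [Finite V₂] (hcov : IsCovering Γ₁ Γ₂ φV φE)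
    (hub : Γ₁.UniformlyBounded) (hconn : Γ₁.Connected) {H₁ : l2 V₁ →L[ℂ] l2 V₁}
    (hH₁ : ∀ f v, H₁ f v = Γ₁.lap f v) (hg : Γ₂.lap g = μ • g) (hg0 : g ≠ 0) :
    ∃ c : ℝ, ∀ F : Finset V₁, F.Nonempty → ∃ f : l2 V₁, f ≠ 0 ∧
      ‖H₁ f - μ • f‖ ^ 2 ≤ c * ((Γ₁.onePlus F \ F).ncard / #F) * ‖f‖ ^ 2 := by
  classical
  obtain ⟨⟨D, hD⟩, C, hC⟩ := hub
  let := Γ₁.locallyFinite fun v => (hD v).1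
  have hdeg (v : V₁) : Γ₁.simple.degree v ≤ D :=
    (WGraph.degree_le_ncard_edgesAt (hD v).1).trans (hD v).2
  obtain ⟨w, hw⟩ : ∃ w, g w ≠ 0 := Function.ne_iff.mp hg0
  obtain ⟨G, hG⟩ := (Set.finite_range fun w => ‖g w‖).bddAbove
  obtain ⟨R, hR⟩ := hcov.exists_walk_to_fiber_le hconn w
  set M := (D + 1) ^ (R + 1)
  set K := D * max C 0 * G + ‖μ‖ * G
  refine ⟨M ^ 2 * K ^ 2 / ‖g w‖ ^ 2, fun F hF => ?_⟩
  set f := l2Indicator (Γ₁.simple.thicken (R + 1) F) (g ∘ φV)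
  have hlow : #F * ‖g w‖ ^ 2 ≤ M * ‖f‖ ^ 2 := by
    have hR' (v : V₁) : ∃ u, ‖g w‖ ^ 2 ≤ ‖(g ∘ φV) u‖ ^ 2 ∧
        ∃ p : Γ₁.simple.Walk v u, p.length ≤ R + 1 := by
      obtain ⟨u, rfl, p, hp⟩ := hR v
      exact ⟨u, le_rfl, p, hp.trans R.le_succ⟩
    exact_mod_cast card_mul_le_pow_mul_norm_sq_l2Indicator_thicken hdeg (sq_nonneg _) hR' F
  have herr := hcov.norm_sq_sub_smul_indicator_comp_le hD
    (fun v e h => (hC v e h).trans (le_max_left C 0)) (le_max_right C 0) hg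
    (fun w => hG ⟨w, rfl⟩) hH₁ (Nat.le_add_left 1 R) F (coe_l2Indicator _ _)
  have hbdry : (#(Γ₁.simple.thicken (R + 1 + 1) F \ F) : ℝ) ≤ M * (Γ₁.onePlus F \ F).ncard := by
    rw [WGraph.onePlus_eq_closedNbhd hconn, ← coe_sdiff, Set.ncard_coe_finset]
    exact_mod_cast card_thicken_succ_sdiff_le hdeg (R + 1) F
  have hF0 : (0 : ℝ) < #F := by exact_mod_cast hF.card_pos
  have hw0 : 0 < ‖g w‖ ^ 2 := by positivity
  refine ⟨f, fun h0 => ?_, herr.trans ?_⟩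
  · rw [h0, norm_zero] at hlow
    nlinarith
  · calc _ ≤ M * (Γ₁.onePlus F \ F).ncard * K ^ 2 := by gcongr
      _ = M ^ 2 * K ^ 2 / ‖g w‖ ^ 2 * ((Γ₁.onePlus F \ F).ncard / #F) *
            (#F * ‖g w‖ ^ 2 / M) := by
          field_simp
      _ ≤ _ := by
          gcongr
          exact (div_le_iff₀' (by positivity)).mpr hlow

end Eigenvector

end IsCovering

open Filter Topology in
theorem spectrum_subset_of_covering_amenable_general
    {V₁ E₁ V₂ E₂ : Type*} [Finite V₂]
    (Γ₁ : WGraph V₁ E₁) (Γ₂ : WGraph V₂ E₂)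
    (hub : Γ₁.UniformlyBounded) (hconn : Γ₁.Connected) (hamen : Γ₁.Amenable)
    (φV : V₁ → V₂) (φE : E₁ → E₂) (hcov : IsCovering Γ₁ Γ₂ φV φE)
    (H₁ : l2 V₁ →L[ℂ] l2 V₁) (H₂ : l2 V₂ →L[ℂ] l2 V₂)
    (hH₁ : ∀ (f : l2 V₁) (v : V₁),
      H₁ f v = ∑' e : {e : E₁ // v ∈ Γ₁.ends e}, Γ₁.wt v e.1 * f (Sym2.Mem.other e.2))
    (hH₂ : ∀ (f : l2 V₂) (v : V₂),
      H₂ f v = ∑' e : {e : E₂ // v ∈ Γ₂.ends e}, Γ₂.wt v e.1 * f (Sym2.Mem.other e.2)) :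
    spectrum ℂ H₂ ⊆ spectrum ℂ H₁ := by
  intro μ hμ
  obtain ⟨g, hg0, hg⟩ := ContinuousLinearMap.exists_eigenvector_of_mem_spectrum hμ
  obtain ⟨c, hc⟩ := hcov.exists_approx_eigenvector hub hconn hH₁ (g := ⇑g)
    (funext fun w => (hH₂ g w).symm.trans (by rw [hg]; rfl)) fun h => hg0 (lp.ext h)
  obtain ⟨F, hFne, -, -, hF⟩ := hamen
  refine mem_spectrum_of_forall_exists_norm_sub_smul_le H₁ μ fun ε hε => ?_
  have hcF : Tendsto (fun k => c * ((Γ₁.onePlus (F k) \ F k).ncard / #(F k))) atTop (𝓝 0) := by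
    simpa using hF.const_mul c
  obtain ⟨k, hk⟩ := (hcF.eventually (gt_mem_nhds (pow_pos hε 2))).exists
  obtain ⟨f, hf0, hf⟩ := hc (F k) (hFne k)
  refine ⟨f, hf0, (sq_le_sq₀ (norm_nonneg _) (by positivity)).mp (hf.trans ?_)⟩
  rw [mul_pow]
  gcongr

/-- weak Hulanicki theorem for graphs, amenable case.  Let `Γ₁` be a
uniformly bounded, connected, amenable weighted graph covering a finite weighted graph
`Γ₂`.  If `H₁`, `H₂` are the Laplace-type operators of `Γ₁`, `Γ₂`, then
`σ(H₂) ⊆ σ(H₁)`. -/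
theorem spectrum_subset_of_covering_amenable
    {V₁ E₁ V₂ E₂ : Type*} [Finite V₂] [Finite E₂]
    (Γ₁ : WGraph V₁ E₁) (Γ₂ : WGraph V₂ E₂)
    (hub : Γ₁.UniformlyBounded) (hconn : Γ₁.Connected) (hamen : Γ₁.Amenable)
    (φV : V₁ → V₂) (φE : E₁ → E₂) (hcov : IsCovering Γ₁ Γ₂ φV φE)
    (H₁ : l2 V₁ →L[ℂ] l2 V₁) (H₂ : l2 V₂ →L[ℂ] l2 V₂)
    (hH₁ : ∀ (f : l2 V₁) (v : V₁),
      H₁ f v = ∑' e : {e : E₁ // v ∈ Γ₁.ends e}, Γ₁.wt v e.1 * f (Sym2.Mem.other e.2))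
    (hH₂ : ∀ (f : l2 V₂) (v : V₂),
      H₂ f v = ∑' e : {e : E₂ // v ∈ Γ₂.ends e}, Γ₂.wt v e.1 * f (Sym2.Mem.other e.2)) :
    spectrum ℂ H₂ ⊆ spectrum ℂ H₁ :=
  spectrum_subset_of_covering_amenable_general Γ₁ Γ₂ hub hconn hamen φV φE hcov H₁ H₂ hH₁ hH₂
end
end

section
/- For every ω ∈ Ω and every n ∈ ℕ, the action of G_ω on the set {0,1}^n of binary words of length n is transitive: for all u, v ∈ {0,1}^n there exists g ∈ G_ω with g(u) = v. (Each of a, b_ω, c_ω, d_ω preserves word length, hence every element of G_ω permutes {0,1}^n.) -/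
noncomputable section

/-- Auxiliary "spinal" transformation: given a Bool-valued predicate `P` and a counter `n`,
walk along the word past leading `true`s (incrementing the counter); upon reaching the first
`false` (with counter value `n`), flip the next letter provided `P n` holds.  Words with no
`false`, or ending right after the first `false`, are fixed. -/
def spinal (P : ℕ → Bool) : ℕ → List Bool → List Bool
  | n, false :: x :: w => if P n then false :: (!x) :: w else false :: x :: w
  | n, true :: w => true :: spinal P (n + 1) w
  | _, w => w

theorem spinal_spinal (P : ℕ → Bool) : ∀ n w, spinal P n (spinal P n w) = w
  | _, [] => rfl
  | n, true :: w => by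
      simp only [spinal, spinal_spinal P (n + 1) w]
  | _, [false] => rfl
  | n, false :: x :: w => by
      by_cases h : P n <;> simp [spinal, h]

theorem spinal_involutive (P : ℕ → Bool) (n : ℕ) : Function.Involutive (spinal P n) :=
  fun w => spinal_spinal P n w

/-- The permutation `σ` of binary words determined by a predicate `P`: it flips the letter
following the first `false` of the word `1^(k) 0 x …` whenever `P (k+1)` holds. -/
def spinalPerm (P : ℕ → Bool) : Equiv.Perm (List Bool) :=
  (spinal_involutive P 1).toPerm

/-- The transformation flipping the first letter of a binary word. -/
def aFun : List Bool → List Bool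
  | [] => []
  | x :: w => (!x) :: w

theorem aFun_involutive : Function.Involutive aFun
  | [] => rfl
  | x :: w => by simp [aFun]

/-- The permutation `a` of binary words flipping the first letter. -/
def aPerm : Equiv.Perm (List Bool) := aFun_involutive.toPerm

/-- `σ_n` (`n ≥ 1`): flips the `(n+1)`-st letter of any word starting with `1^(n-1) 0` of
length at least `n+1`, and fixes all other words. -/
def sigmaPerm (n : ℕ) : Equiv.Perm (List Bool) := spinalPerm (fun m => m == n)

/-- `b_ω`: the (pointwise) product of the `σ_n` over all `n ≥ 1` with `ω n ∈ {0, 1}`. -/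
def bPerm (ω : ℕ → Fin 3) : Equiv.Perm (List Bool) :=
  spinalPerm (fun n => decide (ω n = 0 ∨ ω n = 1))

/-- `c_ω`: the (pointwise) product of the `σ_n` over all `n ≥ 1` with `ω n ∈ {0, 2}`. -/
def cPerm (ω : ℕ → Fin 3) : Equiv.Perm (List Bool) :=
  spinalPerm (fun n => decide (ω n = 0 ∨ ω n = 2))

/-- `d_ω`: the (pointwise) product of the `σ_n` over all `n ≥ 1` with `ω n ∈ {1, 2}`. -/
def dPerm (ω : ℕ → Fin 3) : Equiv.Perm (List Bool) :=
  spinalPerm (fun n => decide (ω n = 1 ∨ ω n = 2))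

/-- The group `G_ω`, i.e. the subgroup of the permutation group of binary words generated by
`a, b_ω, c_ω, d_ω`. -/
def Gomega (ω : ℕ → Fin 3) : Subgroup (Equiv.Perm (List Bool)) :=
  Subgroup.closure {aPerm, bPerm ω, cPerm ω, dPerm ω}

/-- `Ω₂`: at least two of the three symbols `0, 1, 2` occur infinitely often in `ω`
(positions indexed from `1`). -/
def OmegaTwo (ω : ℕ → Fin 3) : Prop :=
  ∃ i j : Fin 3, i ≠ j ∧ {n : ℕ | 1 ≤ n ∧ ω n = i}.Infinite ∧ {n : ℕ | 1 ≤ n ∧ ω n = j}.Infinite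

/-! A word `1^k x w` can have its letter `x` flipped: for `k = 0` this is `a`, and for `k + 1`
the prefix `1^k 1` is first turned into `1^k 0` by induction, after which some `σ_{k+1}` flips
the letter, and the prefix is restored. Hence every word lies in the orbit of the all-`true`
word of its length. Any group containing `a` and, for each `k`, a spinal permutation acting
as `σ_{k+1}` on words starting with `1^k 0` therefore works; `G_ω` is one, since every symbol
lies in `{0, 1}` (giving `b_ω`) or in `{1, 2}` (giving `d_ω`). -/

open MulAction

lemma spinal_replicate_true_append (P : ℕ → Bool) (k m : ℕ) (w : List Bool) :
    spinal P m (List.replicate k true ++ w) = List.replicate k true ++ spinal P (m + k) w := by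
  induction k generalizing m with
  | zero => rfl
  | succ k ih =>
    rw [List.replicate_succ, List.cons_append, spinal, ih, Nat.add_right_comm, Nat.add_assoc]
    rfl

lemma spinalPerm_replicate_true_false_cons (P : ℕ → Bool) (k : ℕ) (hP : P (k + 1) = true)
    (x : Bool) (w : List Bool) :
    spinalPerm P (List.replicate k true ++ false :: x :: w)
      = List.replicate k true ++ false :: (!x) :: w := by
  rw [spinalPerm, Function.Involutive.coe_toPerm, spinal_replicate_true_append, Nat.add_comm]
  simp [spinal, hP]

section Transitivity

variable (H : Subgroup (Equiv.Perm (List Bool)))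

lemma orbit_eq_of_mem {g : Equiv.Perm (List Bool)} (hg : g ∈ H) (u : List Bool) :
    orbit H (g u) = orbit H u :=
  orbit_smul (⟨g, hg⟩ : H) u

lemma orbit_replicate_true_flip (ha : aPerm ∈ H)
    (hσ : ∀ k, ∃ P, P (k + 1) = true ∧ spinalPerm P ∈ H) (k : ℕ) (x : Bool)
    (w : List Bool) :
    orbit H (List.replicate k true ++ x :: w) = orbit H (List.replicate k true ++ (!x) :: w) := by
  induction k generalizing x w with
  | zero => exact (orbit_eq_of_mem H ha (x :: w)).symm
  | succ k ih =>
    obtain ⟨P, hP, hPH⟩ := hσ k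
    simp only [List.replicate_succ', List.append_assoc, List.singleton_append]
    calc orbit H (List.replicate k true ++ true :: x :: w)
        = orbit H (List.replicate k true ++ false :: x :: w) := ih true (x :: w)
      _ = orbit H (List.replicate k true ++ false :: (!x) :: w) := by
          rw [← spinalPerm_replicate_true_false_cons P k hP, orbit_eq_of_mem H hPH]
      _ = orbit H (List.replicate k true ++ true :: (!x) :: w) := (ih true _).symm

lemma orbit_replicate_true_append (ha : aPerm ∈ H)
    (hσ : ∀ k, ∃ P, P (k + 1) = true ∧ spinalPerm P ∈ H) (k : ℕ) (w : List Bool) :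
    orbit H (List.replicate k true ++ w) = orbit H (List.replicate (k + w.length) true) := by
  induction w generalizing k with
  | nil => simp
  | cons x w ih =>
    calc orbit H (List.replicate k true ++ x :: w)
        = orbit H (List.replicate (k + 1) true ++ w) := by
          cases x
          · rw [orbit_replicate_true_flip H ha hσ]
            simp [List.replicate_succ']
          · simp [List.replicate_succ']
      _ = orbit H (List.replicate (k + (x :: w).length) true) := by
          rw [ih, List.length_cons, Nat.add_right_comm, Nat.add_assoc]

lemma exists_mem_apply_eq (ha : aPerm ∈ H)
    (hσ : ∀ k, ∃ P, P (k + 1) = true ∧ spinalPerm P ∈ H) (u v : List Bool)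
    (h : u.length = v.length) :
    ∃ g ∈ H, g u = v := by
  have hu := orbit_replicate_true_append H ha hσ 0 u
  have hv := orbit_replicate_true_append H ha hσ 0 v
  simp only [List.replicate_zero, List.nil_append, Nat.zero_add] at hu hv
  have huv : orbit H v = orbit H u := by rw [hu, hv, h]
  obtain ⟨⟨g, hg⟩, hgu⟩ := orbit_eq_iff.mp huv
  exact ⟨g, hg, hgu⟩

end Transitivity

lemma exists_spinalPerm_mem_Gomega (ω : ℕ → Fin 3) (k : ℕ) :
    ∃ P, P (k + 1) = true ∧ spinalPerm P ∈ Gomega ω := by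
  have hb : bPerm ω ∈ Gomega ω := Subgroup.subset_closure (by simp)
  have hd : dPerm ω ∈ Gomega ω := Subgroup.subset_closure (by simp)
  by_cases h : ω (k + 1) = 2
  · exact ⟨_, by simp [h], hd⟩
  · exact ⟨_, by simp only [decide_eq_true_eq]; omega, hb⟩

/-- For every `ω ∈ Ω` and every `n`, the action of `G_ω` on binary words
of length `n` is transitive. -/
theorem Gomega_transitive (ω : ℕ → Fin 3) (n : ℕ) (u v : List Bool)
    (hu : u.length = n) (hv : v.length = n) :
    ∃ g ∈ Gomega ω, g u = v :=
  exists_mem_apply_eq (Gomega ω) (Subgroup.subset_closure (by simp))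
    (exists_spinalPerm_mem_Gomega ω) u v (hu.trans hv.symm)

end
end

section
/- The unique group homomorphism from the free group F₃ on three generators to Λ sending the three generators to the commutators ⁅a,b⁆, ⁅a,c⁆, ⁅a,d⁆ (where ⁅x,y⁆ = x y x⁻¹ y⁻¹) is injective, and its range equals the commutator subgroup of Λ. In particular, the commutator subgroup of Λ is a free group of rank 3, freely generated by ⁅a,b⁆, ⁅a,c⁆, ⁅a,d⁆. -/
noncomputable section

/-- The defining relators of the group `Λ = ⟨a, b, c, d ∣ a², b², c², d², bcd⟩`
(generators indexed `a = 0`, `b = 1`, `c = 2`, `d = 3`). -/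
def lambdaRels : Set (FreeGroup (Fin 4)) :=
  {FreeGroup.of 0 ^ 2, FreeGroup.of 1 ^ 2, FreeGroup.of 2 ^ 2, FreeGroup.of 3 ^ 2,
    FreeGroup.of 1 * FreeGroup.of 2 * FreeGroup.of 3}

/-- The group `Λ = ⟨a, b, c, d ∣ a², b², c², d², bcd⟩`. -/
abbrev Lambda := PresentedGroup lambdaRels

/-- The generator `a` of `Λ`. -/
def La : Lambda := PresentedGroup.of 0
/-- The generator `b` of `Λ`. -/
def Lb : Lambda := PresentedGroup.of 1
/-- The generator `c` of `Λ`. -/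
def Lc : Lambda := PresentedGroup.of 2
/-- The generator `d` of `Λ`. -/
def Ld : Lambda := PresentedGroup.of 3

open scoped commutatorElement

/-!
Write `x, y, z` for `⁅a,b⁆, ⁅a,c⁆, ⁅a,d⁆`. Conjugation by `a, b, c, d` maps each of `x, y, z` to a
word in `x, y, z` (e.g. `b y b = x⁻¹ z`), and the same formulas define involutive automorphisms
of the free group `F₃ = ⟨x, y, z⟩` satisfying the relations of `Λ`. In the resulting action of `Λ`
on `F₃`, the commutators `⁅a,b⁆, ⁅a,c⁆, ⁅a,d⁆` act as the inner automorphisms by `x, y, z`, so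
`F₃ → Λ → Aut F₃` is `w ↦ conj w`, which is injective because `F₃` has trivial center.

For the range: `a` is an involution and `{1, b, c, d}` is a Klein four-group, so the subgroup
generated by the `⁅a, v⁆` with `v ∈ {b, c, d}` is normal, and modulo it all generators commute.
-/

open Subgroup

section InvolutionGenerated

variable {G : Type*} [Group G]

theorem commute_of_mul_self_eq_one {g h : G} (hg : g * g = 1) (hh : h * h = 1)
    (hgh : g * h * (g * h) = 1) : Commute g h := by
  have hgh' : g * h = (g * h)⁻¹ := eq_inv_of_mul_eq_one_left hgh
  rw [Commute, SemiconjBy, hgh', mul_inv_rev, inv_eq_of_mul_eq_one_left hg,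
    inv_eq_of_mul_eq_one_left hh]

theorem Subgroup.mem_normalizer_closure_of_mul_self_eq_one {s : Set G} {g : G} (hg : g * g = 1)
    (hs : ∀ x ∈ s, g * x * g⁻¹ ∈ closure s) : g ∈ normalizer (closure s : Set G) := by
  have hconj : ∀ x ∈ closure s, g * x * g⁻¹ ∈ closure s := fun x hx =>
    closure_le (K := (closure s).comap (MulAut.conj g).toMonoidHom) |>.2 hs hx
  refine mem_normalizer_iff.2 fun x => ⟨hconj x, fun hx => ?_⟩
  have hgg : ∀ y, g * (g * y) = y := fun y => by rw [← mul_assoc, hg, one_mul]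
  simpa [mul_assoc, hgg, ← mul_inv_rev, hg] using hconj _ hx

theorem isMulCommutative_of_closure_eq_top {s : Set G} (hs : closure s = ⊤)
    (hcomm : ∀ x ∈ s, ∀ y ∈ s, Commute x y) : IsMulCommutative G := by
  rw [← center_eq_top_iff, eq_top_iff, ← centralizer_univ, ← coe_top, ← hs, centralizer_closure,
    closure_le]
  exact fun x hx => mem_centralizer_iff.2 fun y hy => (hcomm y hy x hx).eq

theorem mul_mem_insert_one_of_mul_mul_eq_one {b c d : G} (hb : b * b = 1) (hc : c * c = 1)
    (hd : d * d = 1) (hbcd : b * c * d = 1) :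
    ∀ y ∈ ({b, c, d} : Set G), ∀ z ∈ ({b, c, d} : Set G), y * z ∈ (insert 1 {b, c, d} : Set G) := by
  have swap : ∀ {x y z : G}, x * x = 1 → y * y = 1 → z * z = 1 → x * y = z → y * x = z :=
    fun hx hy hz h => by
      rw [← inv_eq_of_mul_eq_one_left hx, ← inv_eq_of_mul_eq_one_left hy, ← mul_inv_rev, h,
        inv_eq_of_mul_eq_one_left hz]
  have hbc : b * c = d := by rw [eq_inv_of_mul_eq_one_left hbcd, inv_eq_of_mul_eq_one_left hd]
  have hcd : c * d = b := by
    rw [← inv_eq_of_mul_eq_one_left hb, ← eq_inv_of_mul_eq_one_right (by rwa [← mul_assoc])]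
  have hdb : d * b = c := by
    rw [← inv_eq_of_mul_eq_one_left hc, ← eq_inv_of_mul_eq_one_right (by rwa [← mul_assoc, hcd])]
  rintro y (rfl | rfl | rfl) z (rfl | rfl | rfl) <;>
    simp [hb, hc, hd, hbc, hcd, hdb, swap hb hc hd hbc, swap hc hd hb hcd, swap hd hb hc hdb]

variable {a : G} {V : Set G}

theorem closure_commutatorElement_image_normal (ha : a * a = 1) (hV : ∀ v ∈ V, v * v = 1)
    (hVV : ∀ y ∈ V, ∀ z ∈ V, y * z ∈ insert 1 V) (hG : closure (insert a V) = ⊤) :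
    (closure ((⁅a, ·⁆) '' V)).Normal := by
  set N := closure ((⁅a, ·⁆) '' V)
  have hmem : ∀ v ∈ insert 1 V, ⁅a, v⁆ ∈ N := by
    rintro v (rfl | hv)
    · simp
    · exact subset_closure ⟨v, hv, rfl⟩
  rw [← normalizer_eq_top_iff, eq_top_iff, ← hG, closure_le]
  rintro g (rfl | hg)
  · refine mem_normalizer_closure_of_mul_self_eq_one ha ?_
    rintro _ ⟨z, hz, rfl⟩
    have : g * ⁅g, z⁆ * g⁻¹ = ⁅g, z⁆⁻¹ := by
      rw [commutatorElement_inv, commutatorElement_def, commutatorElement_def,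
        inv_eq_of_mul_eq_one_left ha]
      simp [← mul_assoc, ha]
    exact this ▸ inv_mem (hmem z (.inr hz))
  · refine mem_normalizer_closure_of_mul_self_eq_one (hV g hg) ?_
    rintro _ ⟨z, hz, rfl⟩
    have : g * ⁅a, z⁆ * g⁻¹ = ⁅a, g⁆⁻¹ * ⁅a, g * z⁆ := by
      rw [commutatorElement_mul_right_eq_mul_conj]; group
    exact this ▸ mul_mem (inv_mem (hmem g (.inr hg))) (hmem _ (hVV g hg z hz))

theorem commutator_eq_closure_commutatorElement_image (ha : a * a = 1) (hV : ∀ v ∈ V, v * v = 1)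
    (hVV : ∀ y ∈ V, ∀ z ∈ V, y * z ∈ insert 1 V) (hG : closure (insert a V) = ⊤) :
    commutator G = closure ((⁅a, ·⁆) '' V) := by
  set N := closure ((⁅a, ·⁆) '' V)
  have := closure_commutatorElement_image_normal ha hV hVV hG
  refine le_antisymm (Normal.quotient_commutative_iff_commutator_le.1 ?_) ?_
  · let q := QuotientGroup.mk' N
    refine isMulCommutative_of_closure_eq_top (s := q '' insert a V) ?_ ?_
    · rw [← MonoidHom.map_closure, hG, ← MonoidHom.range_eq_map,
        MonoidHom.range_eq_top.2 (QuotientGroup.mk'_surjective N)]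
    · have hcomm_a : ∀ v ∈ V, Commute (q a) (q v) := fun v hv => by
        rw [← commutatorElement_eq_one_iff_commute, ← map_commutatorElement,
          QuotientGroup.mk'_apply, QuotientGroup.eq_one_iff]
        exact subset_closure ⟨v, hv, rfl⟩
      rintro _ ⟨g, rfl | hg, rfl⟩ _ ⟨h, rfl | hh, rfl⟩
      · exact Commute.refl _
      · exact hcomm_a h hh
      · exact (hcomm_a g hg).symm
      · refine (commute_of_mul_self_eq_one (hV g hg) (hV h hh) ?_).map q
        rcases hVV g hg h hh with hgh | hgh
        · rw [hgh, one_mul]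
        · exact hV _ hgh
  · rw [closure_le]
    rintro _ ⟨v, -, rfl⟩
    exact commutator_mem_commutator (mem_top a) (mem_top v)

end InvolutionGenerated

theorem FreeGroup.center_eq_bot {α : Type*} (hα : ∀ i j : α, ∃ k, k ≠ i ∧ k ≠ j) :
    center (FreeGroup α) = ⊥ := by
  classical
  refine eq_bot_iff.2 fun w hw => by_contra fun hw1 => ?_
  have hL : w.toWord ≠ [] := by simpa [toWord_eq_nil_iff] using hw1
  obtain ⟨k, hk, hk'⟩ := hα (w.toWord.head hL).1 (w.toWord.getLast hL).1
  -- `k` differs from the first and the last letter of `w`, so neither `of k * w` nor `w * of k`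
  -- cancels, and their reduced words start differently
  have hleft : (of k * w).toWord = (k, true) :: w.toWord := by
    rw [toWord_mul, toWord_of, List.singleton_append]
    refine IsReduced.reduce_eq (isReduced_toWord.cons fun q hq h => absurd h ?_)
    rw [List.head?_eq_some_head hL, Option.mem_some_iff] at hq
    exact hq ▸ hk
  have hright : (w * of k).toWord = w.toWord ++ [(k, true)] := by
    rw [toWord_mul, toWord_of]
    refine IsReduced.reduce_eq (isReduced_toWord.append IsReduced.singleton
      fun q hq p hp h => absurd h ?_)
    rw [List.getLast?_eq_some_getLast hL, Option.mem_some_iff] at hq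
    rw [List.head?_cons, Option.mem_some_iff] at hp
    exact hp ▸ hq ▸ hk'.symm
  have hhead := congrArg List.head? (congrArg toWord (mem_center_iff.1 hw (of k)))
  rw [hleft, hright, List.head?_append, List.head?_eq_some_head hL] at hhead
  exact hk (congrArg Prod.fst (Option.some_injective _ hhead))

theorem FreeGroup.mulAut_ext {α : Type*} {σ τ : MulAut (FreeGroup α)}
    (h : ∀ i, σ (of i) = τ (of i)) : σ = τ :=
  MulEquiv.toMonoidHom_injective (FreeGroup.ext_hom _ _ h)

theorem MonoidHom.injective_of_comp_eq_conj {F G : Type*} [Group F] [Group G]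
    (hF : center F = ⊥) {ι : F →* G} {Φ : G →* MulAut F} (h : Φ.comp ι = MulAut.conj) :
    Function.Injective ι := by
  refine (injective_iff_map_eq_one ι).2 fun w hw => ?_
  have hconj : MulAut.conj w = 1 := by rw [← h, comp_apply, hw, map_one]
  refine mem_bot.1 (hF ▸ mem_center_iff.2 fun u => ?_)
  simpa [eq_mul_inv_iff_mul_eq] using (DFunLike.congr_fun hconj u).symm

section Involutive

variable {G : Type*} [Group G]

def MulAut.ofInvolutive (f : G →* G) (hf : f.comp f = MonoidHom.id G) : MulAut G :=
  f.toMulEquiv f hf hf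

@[simp]
theorem MulAut.coe_ofInvolutive (f : G →* G) (hf : f.comp f = MonoidHom.id G) :
    ⇑(MulAut.ofInvolutive f hf) = f := rfl

theorem MulAut.ofInvolutive_mul_self (f : G →* G) (hf : f.comp f = MonoidHom.id G) :
    ofInvolutive f hf * ofInvolutive f hf = 1 :=
  MulEquiv.ext fun g => DFunLike.congr_fun hf g

end Involutive

namespace Lambda

theorem La_mul_self : La * La = 1 := by
  have := PresentedGroup.one_of_mem (rels := lambdaRels) (x := .of 0 ^ 2) (by simp [lambdaRels])
  rwa [map_pow, sq] at this

theorem Lb_mul_self : Lb * Lb = 1 := by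
  have := PresentedGroup.one_of_mem (rels := lambdaRels) (x := .of 1 ^ 2) (by simp [lambdaRels])
  rwa [map_pow, sq] at this

theorem Lc_mul_self : Lc * Lc = 1 := by
  have := PresentedGroup.one_of_mem (rels := lambdaRels) (x := .of 2 ^ 2) (by simp [lambdaRels])
  rwa [map_pow, sq] at this

theorem Ld_mul_self : Ld * Ld = 1 := by
  have := PresentedGroup.one_of_mem (rels := lambdaRels) (x := .of 3 ^ 2) (by simp [lambdaRels])
  rwa [map_pow, sq] at this

theorem Lb_mul_Lc_mul_Ld : Lb * Lc * Ld = 1 := by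
  have := PresentedGroup.one_of_mem (rels := lambdaRels) (x := .of 1 * .of 2 * .of 3)
    (by simp [lambdaRels])
  rwa [map_mul, map_mul] at this

theorem closure_generators : closure {La, Lb, Lc, Ld} = ⊤ := by
  rw [eq_top_iff, ← PresentedGroup.closure_range_of, closure_le]
  rintro _ ⟨i, rfl⟩
  fin_cases i <;> exact subset_closure (by simp [La, Lb, Lc, Ld])

theorem commutator_eq_closure : commutator Lambda = closure {⁅La, Lb⁆, ⁅La, Lc⁆, ⁅La, Ld⁆} := by
  rw [commutator_eq_closure_commutatorElement_image La_mul_self ?_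
    (mul_mem_insert_one_of_mul_mul_eq_one Lb_mul_self Lc_mul_self Ld_mul_self Lb_mul_Lc_mul_Ld)
    closure_generators]
  · simp only [Set.image_insert_eq, Set.image_singleton]
  · rintro v (rfl | rfl | rfl)
    exacts [Lb_mul_self, Lc_mul_self, Ld_mul_self]

local notation "x" => FreeGroup.of (0 : Fin 3)
local notation "y" => FreeGroup.of (1 : Fin 3)
local notation "z" => FreeGroup.of (2 : Fin 3)

/- The conjugation actions of `a`, `b`, `c` on `⟨⁅a,b⁆, ⁅a,c⁆, ⁅a,d⁆⟩`, read in the basis `x, y, z`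
of these commutators; `d = c b` then acts as `autC * autB`. -/

def autA : MulAut (FreeGroup (Fin 3)) :=
  .ofInvolutive (FreeGroup.lift ![x⁻¹, y⁻¹, z⁻¹]) (by ext i; fin_cases i <;> simp)

def autB : MulAut (FreeGroup (Fin 3)) :=
  .ofInvolutive (FreeGroup.lift ![x⁻¹, x⁻¹ * z, x⁻¹ * y]) (by ext i; fin_cases i <;> simp)

def autC : MulAut (FreeGroup (Fin 3)) :=
  .ofInvolutive (FreeGroup.lift ![y⁻¹ * z, y⁻¹, y⁻¹ * x]) (by ext i; fin_cases i <;> simp)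

theorem autA_mul_self : autA * autA = 1 := MulAut.ofInvolutive_mul_self _ _
theorem autB_mul_self : autB * autB = 1 := MulAut.ofInvolutive_mul_self _ _
theorem autC_mul_self : autC * autC = 1 := MulAut.ofInvolutive_mul_self _ _

theorem autC_mul_autB_mul_self : autC * autB * (autC * autB) = 1 :=
  FreeGroup.mulAut_ext fun i => by fin_cases i <;> simp [autB, autC]

def conjAction : Lambda →* MulAut (FreeGroup (Fin 3)) :=
  PresentedGroup.toGroup (f := ![autA, autB, autC, autC * autB]) <| by
    rintro r (rfl | rfl | rfl | rfl | rfl) <;>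
      simp [sq, autA_mul_self, autB_mul_self, autC_mul_self, autC_mul_autB_mul_self]
    rw [mul_assoc, ← mul_assoc autC, autC_mul_self, one_mul, autB_mul_self]

theorem commutatorElement_autA_autB : ⁅autA, autB⁆ = MulAut.conj x := by
  rw [commutatorElement_def, inv_eq_of_mul_eq_one_right autA_mul_self,
    inv_eq_of_mul_eq_one_right autB_mul_self]
  exact FreeGroup.mulAut_ext fun i => by fin_cases i <;> simp [autA, autB, mul_assoc]

theorem commutatorElement_autA_autC : ⁅autA, autC⁆ = MulAut.conj y := by
  rw [commutatorElement_def, inv_eq_of_mul_eq_one_right autA_mul_self,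
    inv_eq_of_mul_eq_one_right autC_mul_self]
  exact FreeGroup.mulAut_ext fun i => by fin_cases i <;> simp [autA, autC, mul_assoc]

theorem commutatorElement_autA_autC_mul_autB : ⁅autA, autC * autB⁆ = MulAut.conj z := by
  rw [commutatorElement_def, inv_eq_of_mul_eq_one_right autA_mul_self, mul_inv_rev,
    inv_eq_of_mul_eq_one_right autB_mul_self, inv_eq_of_mul_eq_one_right autC_mul_self]
  exact FreeGroup.mulAut_ext fun i => by fin_cases i <;> simp [autA, autB, autC, mul_assoc]

theorem conjAction_comp_lift :
    conjAction.comp (FreeGroup.lift ![⁅La, Lb⁆, ⁅La, Lc⁆, ⁅La, Ld⁆]) = MulAut.conj := by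
  refine FreeGroup.ext_hom _ _ fun i => ?_
  fin_cases i <;> simp [conjAction, La, Lb, Lc, Ld, PresentedGroup.toGroup.of,
    commutatorElement_autA_autB, commutatorElement_autA_autC, commutatorElement_autA_autC_mul_autB]

end Lambda

/-- The homomorphism `F₃ → Λ` sending the three generators to
`⁅a,b⁆, ⁅a,c⁆, ⁅a,d⁆` is injective with range the commutator subgroup of `Λ`; in
particular the commutator subgroup of `Λ` is free of rank `3`, freely generated by these
commutators. -/
theorem commutator_subgroup_lambda_free :
    Function.Injective (FreeGroup.lift ![⁅La, Lb⁆, ⁅La, Lc⁆, ⁅La, Ld⁆]) ∧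
      (FreeGroup.lift ![⁅La, Lb⁆, ⁅La, Lc⁆, ⁅La, Ld⁆]).range = commutator Lambda := by
  refine ⟨MonoidHom.injective_of_comp_eq_conj (FreeGroup.center_eq_bot ?_)
    Lambda.conjAction_comp_lift, ?_⟩
  · decide
  · rw [FreeGroup.range_lift_eq_closure, Lambda.commutator_eq_closure, Matrix.range_cons,
      Matrix.range_cons, Matrix.range_cons_empty, Set.singleton_union, Set.singleton_union]

end
end

section
/- Let D∞ be the infinite dihedral group, presented by generators s, t and relations s², t² (the quotient of the free group on s, t by the normal closure of {s², t²}), and let λ be its left regular representation on ℓ²(D∞), i.e. (λ(g)f)(h) = f(g⁻¹h). Then the spectrum of the bounded self-adjoint operator (1/4)·λ(s) + (1/2)·λ(t) + (1/4)·I on ℓ²(D∞) is contained in [−1/2, 0] ∪ [1/2, 1] (as a set of real numbers inside ℂ). -/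
/-!
With `a = λ(s)` and `b = λ(t)` self-adjoint involutions, the operator is `A = (a + 2b + 1)/4`.
Since `a² = b² = 1`, squaring gives `A² - A/2 - 1/4 = (ab + ba)/8`, an operator of norm at most
`1/4`. By the spectral mapping theorem every point `z` of the spectrum of the self-adjoint `A` is
real with `|z² - z/2 - 1/4| ≤ 1/4`, which cuts out exactly `[-1/2, 0] ∪ [1/2, 1]`.
-/

noncomputable section

open scoped ENNReal

namespace l2

theorem two_toReal : ((2 : ℝ≥0∞)).toReal = 2 := by simp

theorem memℓp_comp {α : Type*} (e : α ≃ α) (f : ∀ _ : α, ℂ) (hf : Memℓp f 2) :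
    Memℓp (fun x => f (e x)) 2 := by
  have h : (0:ℝ) < (2 : ℝ≥0∞).toReal := by norm_num
  rw [memℓp_gen_iff h] at hf ⊢
  exact (e.summable_iff (f := fun i => ‖f i‖ ^ (2 : ℝ≥0∞).toReal)).2 hf

/-- Composition with a bijection of the index set, as a bounded operator on `ℓ²`. -/
def compEquiv {α : Type*} (e : α ≃ α) : l2 α →L[ℂ] l2 α :=
  LinearMap.mkContinuous
    { toFun := fun f => (⟨fun x => f (e x), memℓp_comp e f f.2⟩ : l2 α)
      map_add' := fun f g => by ext x; simp <;> rfl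
      map_smul' := fun c f => by ext x; simp }
    1
    (by
      intro f
      have h : (0:ℝ) < (2 : ℝ≥0∞).toReal := by norm_num
      have h1 : ‖(⟨fun x => f (e x), memℓp_comp e f f.2⟩ : l2 α)‖
          = (∑' x, ‖f (e x)‖ ^ (2 : ℝ≥0∞).toReal) ^ (1 / (2 : ℝ≥0∞).toReal) :=
        lp.norm_eq_tsum_rpow h _
      have h2 : ‖f‖ = (∑' x, ‖f x‖ ^ (2 : ℝ≥0∞).toReal) ^ (1 / (2 : ℝ≥0∞).toReal) :=
        lp.norm_eq_tsum_rpow h f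
      show ‖(⟨fun x => f (e x), memℓp_comp e f f.2⟩ : l2 α)‖ ≤ 1 * ‖f‖
      rw [one_mul, h1, h2, e.tsum_eq (fun x => ‖f x‖ ^ (2 : ℝ≥0∞).toReal)])

@[simp] theorem compEquiv_apply {α : Type*} (e : α ≃ α) (f : l2 α) (x : α) :
    compEquiv e f x = f (e x) := rfl

end l2

/-- The left regular representation operator `λ(g)` on `ℓ²(G)`:
`(λ(g) f)(h) = f (g⁻¹ * h)`. -/
def lpTranslate {G : Type*} [Group G] (g : G) : l2 G →L[ℂ] l2 G :=
  l2.compEquiv (Equiv.mulLeft g⁻¹)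

@[simp] theorem lpTranslate_apply {G : Type*} [Group G] (g : G) (f : l2 G) (h : G) :
    lpTranslate g f h = f (g⁻¹ * h) := rfl

/-- The Markov operator on `ℓ²(G)` associated with `s₁ s₂ s₃ s₄ : G`:
`(M f)(h) = (1/4) * ∑ i, f (sᵢ⁻¹ * h)`. -/
def markovOp {G : Type*} [Group G] (s₁ s₂ s₃ s₄ : G) : l2 G →L[ℂ] l2 G :=
  ((4 : ℂ))⁻¹ • (lpTranslate s₁ + lpTranslate s₂ + lpTranslate s₃ + lpTranslate s₄)

theorem markovOp_apply {G : Type*} [Group G] (s₁ s₂ s₃ s₄ : G) (f : l2 G) (h : G) :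
    markovOp s₁ s₂ s₃ s₄ f h
      = (4 : ℂ)⁻¹ * (f (s₁⁻¹ * h) + f (s₂⁻¹ * h) + f (s₃⁻¹ * h) + f (s₄⁻¹ * h)) := by
  simp [markovOp, mul_add] <;> rfl

/-- The infinite dihedral group `D∞ = ⟨s, t ∣ s², t²⟩`. -/
abbrev DInf := PresentedGroup ({FreeGroup.of 0 ^ 2, FreeGroup.of 1 ^ 2} :
  Set (FreeGroup (Fin 2)))

/-- The generator `s` of `D∞`. -/
def Ds : DInf := PresentedGroup.of 0
/-- The generator `t` of `D∞`. -/
def Dt : DInf := PresentedGroup.of 1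

open Polynomial

instance l2.instNontrivial {α : Type*} [Nonempty α] : Nontrivial (l2 α) := by
  classical
  obtain ⟨x⟩ := ‹Nonempty α›
  exact ⟨lp.single 2 x 1, 0, fun h => by simpa using congrArg (fun f : l2 α => f x) h⟩

section RegularRepresentation

variable {G : Type*} [Group G]

theorem lpTranslate_one : lpTranslate (1 : G) = 1 := by
  ext f x
  simp

theorem lpTranslate_mul (g h : G) : lpTranslate (g * h) = lpTranslate g * lpTranslate h := by
  ext f x
  simp [mul_assoc]

theorem star_lpTranslate (g : G) : star (lpTranslate g) = lpTranslate g⁻¹ := by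
  rw [ContinuousLinearMap.star_eq_adjoint, eq_comm, ContinuousLinearMap.eq_adjoint_iff]
  intro f k
  rw [lp.inner_eq_tsum, lp.inner_eq_tsum]
  simpa using (Equiv.mulLeft g).tsum_eq fun h => inner ℂ (f h) (k (g⁻¹ * h))

theorem lpTranslate_mul_self {g : G} (hg : g * g = 1) :
    lpTranslate g * lpTranslate g = 1 := by
  rw [← lpTranslate_mul, hg, lpTranslate_one]

theorem isSelfAdjoint_lpTranslate {g : G} (hg : g * g = 1) :
    IsSelfAdjoint (lpTranslate g) := by
  rw [IsSelfAdjoint, star_lpTranslate, inv_eq_of_mul_eq_one_left hg]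

end RegularRepresentation

theorem PresentedGroup.of_sq_eq_one {α : Type*} {rels : Set (FreeGroup α)} {x : α}
    (hx : FreeGroup.of x ^ 2 ∈ rels) : (PresentedGroup.of x : PresentedGroup rels) ^ 2 = 1 :=
  PresentedGroup.one_of_mem hx

theorem Ds_mul_self : Ds * Ds = 1 := by
  rw [← sq]; exact PresentedGroup.of_sq_eq_one (by simp)

theorem Dt_mul_self : Dt * Dt = 1 := by
  rw [← sq]; exact PresentedGroup.of_sq_eq_one (by simp)

theorem aeval_quadratic_eq {𝕜 A : Type*} [Field 𝕜] [CharZero 𝕜] [Ring A] [Algebra 𝕜 A]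
    {a b : A} (ha : a * a = 1) (hb : b * b = 1) :
    aeval ((4 : 𝕜)⁻¹ • a + (2 : 𝕜)⁻¹ • b + (4 : 𝕜)⁻¹ • 1) (X ^ 2 - C 2⁻¹ * X - C 4⁻¹ : 𝕜[X])
      = (8 : 𝕜)⁻¹ • (a * b + b * a) := by
  simp only [map_sub, map_mul, aeval_X, aeval_C, Algebra.algebraMap_eq_smul_one, sq,
    add_mul, mul_add, smul_mul_assoc, mul_smul_comm, smul_smul, ha, hb, mul_one, one_mul, smul_add]
  module

theorem norm_eval_le_of_mem_spectrum {𝕜 A : Type*} [NormedField 𝕜] [NormedRing A]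
    [NormedAlgebra 𝕜 A] [CompleteSpace A] [NormOneClass A] {a : A} {z : 𝕜}
    (hz : z ∈ spectrum 𝕜 a) (p : 𝕜[X]) : ‖p.eval z‖ ≤ ‖aeval a p‖ :=
  spectrum.norm_le_norm_of_mem (spectrum.subset_polynomial_aeval a p ⟨z, hz, rfl⟩)

theorem mem_Icc_union_Icc_of_abs_quadratic_le {x : ℝ} (hx : |x ^ 2 - 2⁻¹ * x - 4⁻¹| ≤ 4⁻¹) :
    x ∈ Set.Icc (-(1 / 2) : ℝ) 0 ∪ Set.Icc (1 / 2) 1 := by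
  obtain ⟨h₁, h₂⟩ := abs_le.mp hx
  rcases le_or_gt x 0 with hx0 | hx0
  · exact Or.inl ⟨by nlinarith, hx0⟩
  · exact Or.inr ⟨by nlinarith, by nlinarith⟩

section Symmetries

variable {A : Type*} [CStarAlgebra A] [Nontrivial A]

theorem norm_eq_one_of_isSelfAdjoint_of_mul_self_eq_one {a : A} (ha : IsSelfAdjoint a)
    (haa : a * a = 1) : ‖a‖ = 1 :=
  CStarRing.norm_of_mem_unitary <| Unitary.mem_iff.mpr <| by simp only [ha.star_eq, haa, and_self]

theorem spectrum_symmetry_combination_subset {a b : A} (ha : IsSelfAdjoint a)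
    (hb : IsSelfAdjoint b) (haa : a * a = 1) (hbb : b * b = 1) :
    spectrum ℂ ((4 : ℂ)⁻¹ • a + (2 : ℂ)⁻¹ • b + (4 : ℂ)⁻¹ • 1) ⊆
      Complex.ofReal '' (Set.Icc (-(1 / 2) : ℝ) 0 ∪ Set.Icc (1 / 2) 1) := by
  intro z hz
  have hsa : IsSelfAdjoint ((4 : ℂ)⁻¹ • a + (2 : ℂ)⁻¹ • b + (4 : ℂ)⁻¹ • (1 : A)) := by
    simp [IsSelfAdjoint, ha.star_eq, hb.star_eq]
  have hz_re : z = z.re := hsa.mem_spectrum_eq_re hz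
  have hanticomm : ‖a * b + b * a‖ ≤ 2 := by
    calc ‖a * b + b * a‖ ≤ ‖a‖ * ‖b‖ + ‖b‖ * ‖a‖ :=
          norm_add_le_of_le (norm_mul_le _ _) (norm_mul_le _ _)
      _ = 2 := by
        rw [norm_eq_one_of_isSelfAdjoint_of_mul_self_eq_one ha haa,
          norm_eq_one_of_isSelfAdjoint_of_mul_self_eq_one hb hbb]
        norm_num
  have hbound : ‖(X ^ 2 - C 2⁻¹ * X - C 4⁻¹ : ℂ[X]).eval z‖ ≤ 4⁻¹ := by
    calc _ ≤ _ := norm_eval_le_of_mem_spectrum hz _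
      _ = 8⁻¹ * ‖a * b + b * a‖ := by rw [aeval_quadratic_eq haa hbb, norm_smul]; norm_num
      _ ≤ 4⁻¹ := by linarith
  refine ⟨z.re, mem_Icc_union_Icc_of_abs_quadratic_le ?_, hz_re.symm⟩
  rw [hz_re] at hbound
  rw [← Real.norm_eq_abs, ← Complex.norm_real]
  push_cast
  simpa using hbound

end Symmetries

/-- The spectrum of `(1/4)λ(s) + (1/2)λ(t) + (1/4)I` on `ℓ²(D∞)` is
contained in `[-1/2, 0] ∪ [1/2, 1]` (as a set of real numbers inside `ℂ`). -/
theorem spectrum_dihedral_subset :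
    spectrum ℂ
        ((4 : ℂ)⁻¹ • lpTranslate Ds + (2 : ℂ)⁻¹ • lpTranslate Dt
          + (4 : ℂ)⁻¹ • (1 : l2 DInf →L[ℂ] l2 DInf)) ⊆
      Complex.ofReal '' (Set.Icc (-(1 / 2) : ℝ) 0 ∪ Set.Icc (1 / 2) 1) :=
  spectrum_symmetry_combination_subset
    (isSelfAdjoint_lpTranslate Ds_mul_self)
    (isSelfAdjoint_lpTranslate Dt_mul_self)
    (lpTranslate_mul_self Ds_mul_self)
    (lpTranslate_mul_self Dt_mul_self)

end
end

section
/- Let Γ be a connected simple graph on a vertex set V in which every vertex has degree at most D (for some D ∈ ℕ), let v₀ ∈ V, and let B_n(v₀) denote the closed ball of radius n around v₀ in the graph metric. If liminf_{n→∞} |B_n(v₀)|^{1/n} = 1, then there is a strictly increasing sequence of natural numbers (n_k) such that the balls F_k = B_{n_k}(v₀) form a Følner sequence: ∪_k F_k = V and |B₁(F_k) ∖ F_k| / |F_k| → 0 as k → ∞, where B₁(F) denotes the set of vertices at graph distance at most 1 from the set F. -/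
/-!
If the ratios `|B_{n+1}| / |B_n|` stayed above `1 + ε` from some radius on, the balls would grow
like `K (1 + ε)^n` and `liminf |B_n|^{1/n}` would be at least `1 + ε`. So for every `k` there are
arbitrarily large radii with `|B_{n+1}| / |B_n| < 1 + 1/(k+1)`, and along such radii the boundary
`B₁(B_n) \ B_n ⊆ B_{n+1} \ B_n` is small relative to `B_n`. Bounded degree enters only through
`|B_n| ≤ (D+1)^n`, which keeps `|B_n|^{1/n}` bounded so that the `liminf` is not a junk value.
-/

open Filter Set

section GrowthRate

variable {b : ℕ → ℝ}

lemma exists_pos_mul_pow_le_of_eventually_mul_le {c : ℝ} (hc : 0 < c) (hb : ∀ n, 0 < b n)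
    (h : ∀ᶠ n in atTop, c * b n ≤ b (n + 1)) : ∃ K > 0, ∀ᶠ n in atTop, K * c ^ n ≤ b n := by
  obtain ⟨N, hN⟩ := eventually_atTop.1 h
  have hgeom : ∀ m, c ^ m * b N ≤ b (N + m) := by
    intro m
    induction m with
    | zero => simp
    | succ m ih =>
      calc c ^ (m + 1) * b N = c * (c ^ m * b N) := by ring
        _ ≤ c * b (N + m) := by gcongr
        _ ≤ b (N + m + 1) := hN _ (by omega)
  refine ⟨b N / c ^ N, div_pos (hb N) (pow_pos hc N), eventually_atTop.2 ⟨N, fun n hn => ?_⟩⟩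
  obtain ⟨m, rfl⟩ := Nat.exists_eq_add_of_le hn
  calc b N / c ^ N * c ^ (N + m) = c ^ m * b N := by field_simp; ring
    _ ≤ b (N + m) := hgeom m

lemma le_liminf_rpow_inv_of_eventually_mul_pow_le {K c : ℝ} (hK : 0 < K) (hc : 0 < c)
    (h : ∀ᶠ n in atTop, K * c ^ n ≤ b n)
    (hbdd : IsBoundedUnder (· ≤ ·) atTop fun n => b n ^ (n : ℝ)⁻¹) :
    c ≤ liminf (fun n => b n ^ (n : ℝ)⁻¹) atTop := by
  have hroot : Tendsto (fun n : ℕ => K ^ (n : ℝ)⁻¹ * c) atTop (nhds c) := by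
    simpa using ((tendsto_const_nhds (x := K)).rpow
      (tendsto_inv_atTop_zero.comp tendsto_natCast_atTop_atTop) (Or.inl hK.ne')).mul_const c
  rw [← hroot.liminf_eq]
  refine liminf_le_liminf ?_ hroot.isBoundedUnder_ge hbdd.isCoboundedUnder_ge
  filter_upwards [h, eventually_ne_atTop 0] with n hn hn0
  calc K ^ (n : ℝ)⁻¹ * c = (K * c ^ n) ^ (n : ℝ)⁻¹ := by
        rw [Real.mul_rpow hK.le (by positivity), Real.pow_rpow_inv_natCast hc.le hn0]
    _ ≤ b n ^ (n : ℝ)⁻¹ := by gcongr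

lemma frequently_div_lt_one_add_of_liminf_rpow_inv_eq_one (hb : ∀ n, 0 < b n)
    (hbdd : IsBoundedUnder (· ≤ ·) atTop fun n => b n ^ (n : ℝ)⁻¹)
    (hlim : liminf (fun n => b n ^ (n : ℝ)⁻¹) atTop = 1) {ε : ℝ} (hε : 0 < ε) :
    ∃ᶠ n in atTop, b (n + 1) / b n < 1 + ε := by
  by_contra hfreq
  have hgrowth : ∀ᶠ n in atTop, (1 + ε) * b n ≤ b (n + 1) := by
    filter_upwards [not_frequently.1 hfreq] with n hn
    exact (le_div_iff₀ (hb n)).1 (not_lt.1 hn)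
  obtain ⟨K, hK, hKb⟩ := exists_pos_mul_pow_le_of_eventually_mul_le (by linarith) hb hgrowth
  have := le_liminf_rpow_inv_of_eventually_mul_pow_le hK (by linarith) hKb hbdd
  linarith

end GrowthRate

namespace SimpleGraph

variable {V : Type*} {G : SimpleGraph V} {c u : V} {n : ℕ}

/-- Only meaningful in a connected graph: `G.dist` is `0` between unreachable vertices. -/
def closedBall (G : SimpleGraph V) (c : V) (n : ℕ) : Set V := {u | G.dist c u ≤ n}

lemma mem_closedBall_self : c ∈ G.closedBall c n := by simp [closedBall]

lemma ncard_closedBall_pos (hfin : (G.closedBall c n).Finite) : 0 < (G.closedBall c n).ncard :=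
  (ncard_pos hfin).2 ⟨c, mem_closedBall_self⟩

lemma closedBall_mono : Monotone (G.closedBall c) :=
  fun _ _ hmn _ hu => le_trans hu hmn

lemma iUnion_closedBall_eq_univ {φ : ℕ → ℕ} (hφ : StrictMono φ) :
    ⋃ k, G.closedBall c (φ k) = univ :=
  eq_univ_of_forall fun u => mem_iUnion.2 ⟨G.dist c u, hφ.le_apply⟩

lemma Reachable.exists_adj_dist_le_of_dist_eq_succ (h : G.Reachable c u)
    (hd : G.dist c u = n + 1) : ∃ w, G.Adj w u ∧ G.dist c w ≤ n := by
  obtain ⟨p, hp⟩ := h.exists_walk_length_eq_dist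
  have hnil : ¬p.Nil := by rw [← Walk.length_eq_zero_iff]; omega
  refine ⟨p.penultimate, p.adj_penultimate hnil, ?_⟩
  calc G.dist c p.penultimate ≤ p.dropLast.length := dist_le _
    _ = n := by rw [Walk.length_dropLast]; omega

lemma Connected.closedBall_succ_subset (hconn : G.Connected) :
    G.closedBall c (n + 1) ⊆ ⋃ w ∈ G.closedBall c n, insert w (G.neighborSet w) := by
  intro u hu
  rcases Nat.le_succ_iff.1 hu with hle | hd
  · exact mem_biUnion hle (mem_insert u _)
  · obtain ⟨w, hadj, hw⟩ := (hconn c u).exists_adj_dist_le_of_dist_eq_succ hd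
    exact mem_biUnion hw (mem_insert_of_mem _ hadj)

lemma Connected.closedBall_zero (hconn : G.Connected) : G.closedBall c 0 = {c} := by
  ext u
  change G.dist c u ≤ 0 ↔ u = c
  rw [Nat.le_zero, (hconn c u).dist_eq_zero_iff, eq_comm]

lemma Connected.finite_closedBall (hconn : G.Connected) (hfin : ∀ v, (G.neighborSet v).Finite) :
    ∀ n, (G.closedBall c n).Finite
  | 0 => by simp [hconn.closedBall_zero]
  | n + 1 => ((hconn.finite_closedBall hfin n).biUnion fun w _ => (hfin w).insert w).subset
      hconn.closedBall_succ_subset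

lemma Connected.ncard_closedBall_le (hconn : G.Connected) (hfin : ∀ v, (G.neighborSet v).Finite)
    {D : ℕ} (hD : ∀ v, (G.neighborSet v).ncard ≤ D) : ∀ n, (G.closedBall c n).ncard ≤ (D + 1) ^ n
  | 0 => by simp [hconn.closedBall_zero]
  | n + 1 => by
    have hball := hconn.finite_closedBall (c := c) hfin n
    calc (G.closedBall c (n + 1)).ncard
        ≤ (⋃ w ∈ G.closedBall c n, insert w (G.neighborSet w)).ncard :=
          ncard_le_ncard hconn.closedBall_succ_subset
            (hball.biUnion fun w _ => (hfin w).insert w)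
      _ ≤ ∑ w ∈ hball.toFinset, (insert w (G.neighborSet w)).ncard := by
          simpa using hball.toFinset.set_ncard_biUnion_le fun w => insert w (G.neighborSet w)
      _ ≤ (G.closedBall c n).ncard * (D + 1) := by
          rw [ncard_eq_toFinset_card _ hball]
          exact Finset.sum_le_card_nsmul _ _ _ fun w _ =>
            (ncard_insert_le _ _).trans (Nat.add_le_add_right (hD w) 1)
      _ ≤ (D + 1) ^ n * (D + 1) := by gcongr; exact hconn.ncard_closedBall_le hfin hD n
      _ = (D + 1) ^ (n + 1) := (pow_succ _ _).symm

lemma Connected.rpow_inv_ncard_closedBall_le (hconn : G.Connected)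
    (hfin : ∀ v, (G.neighborSet v).Finite) {D : ℕ} (hD : ∀ v, (G.neighborSet v).ncard ≤ D) (n : ℕ) :
    ((G.closedBall c n).ncard : ℝ) ^ (n : ℝ)⁻¹ ≤ D + 1 := by
  rcases Nat.eq_zero_or_pos n with rfl | hn
  · simp
  · rw [Real.rpow_inv_le_iff_of_pos (by positivity) (by positivity) (by positivity),
      Real.rpow_natCast]
    exact_mod_cast hconn.ncard_closedBall_le hfin hD n

lemma Connected.thickening_closedBall_subset (hconn : G.Connected) :
    {u | ∃ w ∈ G.closedBall c n, G.dist w u ≤ 1} ⊆ G.closedBall c (n + 1) := by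
  rintro u ⟨w, hw, hwu⟩
  exact (hconn.dist_triangle (v := w)).trans (Nat.add_le_add hw hwu)

lemma Connected.ncard_boundary_div_le (hconn : G.Connected)
    (hfin : (G.closedBall c (n + 1)).Finite) :
    (({u | ∃ w ∈ G.closedBall c n, G.dist w u ≤ 1} \ G.closedBall c n).ncard : ℝ) /
        (G.closedBall c n).ncard ≤
      (G.closedBall c (n + 1)).ncard / (G.closedBall c n).ncard - 1 := by
  have hsub := closedBall_mono (G := G) (c := c) n.le_succ
  have hpos : (0 : ℝ) < (G.closedBall c n).ncard :=
    Nat.cast_pos.2 (ncard_closedBall_pos (hfin.subset hsub))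
  have hcard : ({u | ∃ w ∈ G.closedBall c n, G.dist w u ≤ 1} \ G.closedBall c n).ncard ≤
      (G.closedBall c (n + 1)).ncard - (G.closedBall c n).ncard := by
    rw [← ncard_sdiff hsub (hfin.subset hsub)]
    exact ncard_le_ncard (sdiff_subset_sdiff_left hconn.thickening_closedBall_subset) hfin.sdiff
  rw [div_sub_one hpos.ne', div_le_div_iff_of_pos_right hpos,
    ← Nat.cast_sub (ncard_le_ncard hsub hfin)]
  exact_mod_cast hcard

end SimpleGraph

open SimpleGraph

/-- In a connected simple graph of uniformly bounded degree with
subexponential growth (`liminf |B_n(v₀)|^(1/n) = 1`), there is a strictly increasing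
sequence of radii `n k` such that the balls `B_{n k}(v₀)` form a Følner sequence. -/
theorem balls_foelner_of_subexponential {V : Type*} (G : SimpleGraph V)
    (hconn : G.Connected) (D : ℕ)
    (hdeg : ∀ v : V, (G.neighborSet v).Finite ∧ (G.neighborSet v).ncard ≤ D)
    (v₀ : V)
    (hsub : Filter.liminf
      (fun n : ℕ => (({u : V | G.dist v₀ u ≤ n}.ncard : ℝ)) ^ ((n : ℝ)⁻¹))
      Filter.atTop = 1) :
    ∃ nk : ℕ → ℕ, StrictMono nk ∧
      (⋃ k, {u : V | G.dist v₀ u ≤ nk k}) = Set.univ ∧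
      Filter.Tendsto
        (fun k =>
          (({u : V | ∃ w : V, G.dist v₀ w ≤ nk k ∧ G.dist w u ≤ 1} \
              {u : V | G.dist v₀ u ≤ nk k}).ncard : ℝ) /
            ({u : V | G.dist v₀ u ≤ nk k}.ncard : ℝ))
        Filter.atTop (nhds 0) := by
  have hfin : ∀ v, (G.neighborSet v).Finite := fun v => (hdeg v).1
  have hD : ∀ v, (G.neighborSet v).ncard ≤ D := fun v => (hdeg v).2
  set b : ℕ → ℝ := fun n => ((G.closedBall v₀ n).ncard : ℝ)
  have hb : ∀ n, 0 < b n := fun n =>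
    Nat.cast_pos.2 (ncard_closedBall_pos (hconn.finite_closedBall hfin n))
  have hbdd : IsBoundedUnder (· ≤ ·) atTop fun n => b n ^ (n : ℝ)⁻¹ :=
    isBoundedUnder_of ⟨D + 1, hconn.rpow_inv_ncard_closedBall_le hfin hD⟩
  have hratio (k : ℕ) : ∃ᶠ n in atTop, b (n + 1) / b n < 1 + 1 / (k + 1) :=
    frequently_div_lt_one_add_of_liminf_rpow_inv_eq_one hb hbdd hsub (by positivity)
  obtain ⟨nk, hmono, hnk⟩ := extraction_forall_of_frequently hratio
  refine ⟨nk, hmono, iUnion_closedBall_eq_univ hmono, ?_⟩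
  refine squeeze_zero (fun k => by positivity) (fun k => ?_)
    tendsto_one_div_add_atTop_nhds_zero_nat
  calc _ ≤ b (nk k + 1) / b (nk k) - 1 :=
        hconn.ncard_boundary_div_le (hconn.finite_closedBall hfin _)
    _ ≤ 1 / (k + 1) := by linarith [hnk k]
end
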